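/- The sigmoid function σ(x) = 1/(1 + e^{−x}) on ℝ is (5/8)-averaged, i.e., the function x ↦ x + (8/5)(σ(x) − x) is 1-Lipschitz. -/

import Mathlib

/-!
A monotone 1-Lipschitz map `r` of `ℝ` moves `y - x ≥ 0` to some `r y - r x ∈ [0, y - x]`, so
`x ↦ x + c (r x - x)` moves it to `(1 - c)(y - x) + c (r y - r x) ∈ [(1 - c)(y - x), y - x]`,
which is nonexpansive as soon as `0 ≤ c ≤ 2`. Hence such an `r` is `γ`-averaged for every
`γ ≥ 1/2`. The sigmoid is increasing, with derivative `σ (1 - σ) ≤ 1/4`.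
-/

open Real

def IsAveraged (γ : ℝ) (r : ℝ → ℝ) : Prop :=
  LipschitzWith 1 (fun x => x + γ⁻¹ * (r x - x))

theorem Monotone.lipschitzWith_one_add_mul_sub {r : ℝ → ℝ} (hmono : Monotone r)
    (hlip : LipschitzWith 1 r) {c : ℝ} (hc₀ : 0 ≤ c) (hc₂ : c ≤ 2) :
    LipschitzWith 1 (fun x => x + c * (r x - x)) := by
  refine LipschitzWith.of_dist_le_mul fun x y => ?_
  simp only [NNReal.coe_one, one_mul, Real.dist_eq]
  wlog hxy : y ≤ x generalizing x y
  · rw [abs_sub_comm, abs_sub_comm x]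
    exact this y x (le_of_not_ge hxy)
  have hr₀ : 0 ≤ r x - r y := sub_nonneg.2 (hmono hxy)
  have hr₁ : r x - r y ≤ x - y := by
    simpa [abs_of_nonneg hr₀, abs_of_nonneg (sub_nonneg.2 hxy), Real.dist_eq] using
      hlip.dist_le_mul x y
  rw [abs_of_nonneg (sub_nonneg.2 hxy), abs_le]
  constructor <;> nlinarith

theorem Monotone.isAveraged {r : ℝ → ℝ} (hmono : Monotone r) (hlip : LipschitzWith 1 r)
    {γ : ℝ} (hγ : 1 / 2 ≤ γ) : IsAveraged γ r :=
  hmono.lipschitzWith_one_add_mul_sub hlip (inv_nonneg.2 (by linarith))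
    (inv_le_of_inv_le₀ (by norm_num) (by simpa using hγ))

theorem Real.lipschitzWith_sigmoid : LipschitzWith 4⁻¹ sigmoid := by
  refine lipschitzWith_of_nnnorm_deriv_le differentiable_sigmoid fun x => ?_
  rw [deriv_sigmoid, ← NNReal.coe_le_coe, coe_nnnorm, Real.norm_eq_abs, abs_le]
  have h₀ := sigmoid_nonneg x
  have h₁ := sigmoid_le_one x
  push_cast
  constructor <;> nlinarith [sq_nonneg (sigmoid x - 1 / 2)]

theorem Real.isAveraged_sigmoid {γ : ℝ} (hγ : 1 / 2 ≤ γ) : IsAveraged γ sigmoid :=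
  sigmoid_monotone.isAveraged
    (lipschitzWith_sigmoid.weaken (inv_le_one_of_one_le₀ (by norm_num))) hγ

theorem sigmoid_is_five_eighths_averaged :
    LipschitzWith 1
      (fun x : ℝ => x + (8 / 5) * (1 / (1 + Real.exp (-x)) - x)) := by
  have h : IsAveraged (5 / 8) sigmoid := isAveraged_sigmoid (by norm_num)
  norm_num [IsAveraged, sigmoid_def, one_div] at h ⊢
  exact h
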